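/- arXiv:2211.03739 — 7 statements merged into one kernel-verified Lean document; each statement's English description precedes it below -/
import Mathlib

section
/- Let (X, Σ, μ) be a measure space and let ξ₁, ξ₂ ∈ L²(X, μ). Then for all but at most countably many λ ∈ ℂ, the support of ξ₁ + λ·ξ₂ equals supp(ξ₁) ∪ supp(ξ₂) up to a μ-null set; that is, the set {λ ∈ ℂ : μ((supp(ξ₁) ∪ supp(ξ₂)) \ supp(ξ₁ + λξ₂)) ≠ 0} is countable. -/
/-!
Off a null set, a point `x` lies in `(supp ξ₁ ∪ supp ξ₂) \ supp (ξ₁ + λξ₂)` exactly when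
`ξ₂ x ≠ 0` and `λ = -ξ₁ x / ξ₂ x`. So these sets are pairwise disjoint for distinct `λ`, and
they all lie in the support of `ξ₂`, on which `μ` is σ-finite because `ξ₂ ∈ L²`. A σ-finite
measure gives positive mass to at most countably many disjoint sets.
-/

open Function Set Filter MeasureTheory

namespace Function

variable {X R M : Type*}

theorem union_support_diff_support_add_smul [AddZeroClass M] [SMulZeroClass R M]
    (f g : X → M) (c : R) :
    (support f ∪ support g) \ support (f + c • g) = support g \ support (f + c • g) := by
  ext x
  by_cases hgx : g x = 0 <;> simp [hgx]

theorem pairwise_disjoint_support_diff_support_add_smul [Ring R] [AddCommGroup M] [Module R M]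
    [NoZeroSMulDivisors R M] (f g : X → M) :
    Pairwise (Disjoint on fun c : R => support g \ support (f + c • g)) := by
  intro c₁ c₂ hne
  refine Set.disjoint_left.mpr fun x ⟨hgx, h₁⟩ ⟨_, h₂⟩ => hne ?_
  simp only [mem_support, not_not, Pi.add_apply, Pi.smul_apply] at hgx h₁ h₂
  have hsmul : (c₁ - c₂) • g x = 0 := by rw [sub_smul, sub_eq_zero, ← add_right_inj (f x), h₁, h₂]
  exact sub_eq_zero.mp ((eq_zero_or_eq_zero_of_smul_eq_zero hsmul).resolve_right hgx)

end Function

namespace MeasureTheory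

variable {X : Type*} [MeasurableSpace X] {μ : Measure X}

theorem AEFinStronglyMeasurable.aestronglyMeasurable {E : Type*} [Zero E] [TopologicalSpace E]
    {f : X → E} (hf : AEFinStronglyMeasurable f μ) : AEStronglyMeasurable f μ :=
  hf.finStronglyMeasurable_mk.stronglyMeasurable.aestronglyMeasurable.congr hf.ae_eq_mk.symm

theorem countable_setOf_measure_ne_zero_of_subset_support {ι E : Type*} [Zero E]
    [TopologicalSpace E] [T2Space E] {s : ι → Set X} (hs : ∀ i, NullMeasurableSet (s i) μ)
    (hdisj : Pairwise (Disjoint on s)) {g : X → E} (hg : AEFinStronglyMeasurable g μ)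
    (hsub : ∀ i, s i ⊆ support g) : {i | μ (s i) ≠ 0}.Countable := by
  obtain ⟨t, ht, hg_zero, _⟩ := hg.exists_set_sigmaFinite
  have hsupport : μ (support g \ t) = 0 := by
    have hg_zero' := ae_iff.mp ((ae_restrict_iff' ht.compl).mp hg_zero)
    refine measure_mono_null ?_ hg_zero'
    rintro x ⟨hgx, hxt⟩ hx
    exact hgx (hx hxt)
  have hrestrict : ∀ i, μ.restrict t (s i) = μ (s i) := fun i => by
    rw [Measure.restrict_apply' ht]
    exact measure_inter_conull' (measure_mono_null (sdiff_subset_sdiff_left (hsub i)) hsupport)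
  refine (Measure.countable_meas_pos_of_disjoint_iUnion₀ (μ := μ.restrict t)
    (fun i => (hs i).mono Measure.restrict_le_self) fun _ _ h => (hdisj h).aedisjoint).mono ?_
  intro i hi
  simpa only [mem_ofPred_eq, hrestrict, pos_iff_ne_zero] using hi

theorem countable_setOf_measure_support_diff_support_add_smul_ne_zero {R E : Type*} [Ring R]
    [AddCommGroup E] [Module R E] [NoZeroSMulDivisors R E] [TopologicalSpace E]
    [TopologicalSpace.MetrizableSpace E] [ContinuousAdd E] [ContinuousConstSMul R E]
    {f g : X → E} (hf : AEStronglyMeasurable f μ) (hg : AEFinStronglyMeasurable g μ) :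
    {c : R | μ (support g \ support (f + c • g)) ≠ 0}.Countable :=
  countable_setOf_measure_ne_zero_of_subset_support
    (fun c => hg.aestronglyMeasurable.nullMeasurableSet_support.diff
      (hf.add (hg.aestronglyMeasurable.const_smul c)).nullMeasurableSet_support)
    (pairwise_disjoint_support_diff_support_add_smul f g) hg fun _ => sdiff_subset

end MeasureTheory

/-- For `ξ₁ ξ₂ ∈ L²(X, μ)`, for all but countably many `λ ∈ ℂ` the support of `ξ₁ + λξ₂`
equals `supp ξ₁ ∪ supp ξ₂` up to a `μ`-null set. -/
theorem countable_bad_lambdas {X : Type*} [MeasurableSpace X] (μ : Measure X)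
    (ξ₁ ξ₂ : Lp ℂ 2 μ) :
    {l : ℂ | μ ((Function.support ⇑ξ₁ ∪ Function.support ⇑ξ₂) \
        Function.support ⇑(ξ₁ + l • ξ₂)) ≠ 0}.Countable := by
  refine (countable_setOf_measure_support_diff_support_add_smul_ne_zero (Lp.aestronglyMeasurable ξ₁)
    ((Lp.memLp ξ₂).aefinStronglyMeasurable two_ne_zero ENNReal.ofNat_ne_top)).mono fun l hl => ?_
  have hcoe : ⇑(ξ₁ + l • ξ₂) =ᵐ[μ] ⇑ξ₁ + l • ⇑ξ₂ :=
    (Lp.coeFn_add _ _).trans (EventuallyEq.rfl.add (Lp.coeFn_smul _ _))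
  rwa [mem_ofPred_eq, measure_congr (EventuallyEq.rfl.diff hcoe.support),
    union_support_diff_support_add_smul] at hl
end

section
/- Let (X, Σ, μ) be a measure space and let (ξ_n)_{n≥1} be a sequence in L²(X, μ). Then there exist constants (λ_n)_{n≥1} ⊆ ℂ such that for every N ∈ ℕ, supp(∑_{n=1}^N λ_n ξ_n) equals ⋃_{n=1}^N supp(ξ_n) up to a μ-null set. -/
/-!
Choose the coefficients one at a time. Given the partial sum `f` and the next function `g`,
the sets `{g ≠ 0, f + c • g = 0}` are pairwise disjoint as `c` ranges over the scalars, and `g`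
lives on a σ-finite set since it is in `Lp` with `p < ∞`; so only countably many of them have
positive measure and some `c` makes `f + c • g` vanish almost nowhere on the support of `g`.
-/

open MeasureTheory Filter Set Function

section

variable {X 𝕜 E : Type*} [NormedField 𝕜] [NormedAddCommGroup E] [NormedSpace 𝕜 E]

lemma pairwise_disjoint_setOf_ne_zero_add_smul_eq_zero (f g : X → E) :
    Pairwise (Disjoint on fun c : 𝕜 ↦ {x | g x ≠ 0 ∧ f x + c • g x = 0}) := by
  intro c c' hcc'
  refine Set.disjoint_left.2 fun x ⟨hgx, hx⟩ ⟨_, hx'⟩ ↦ hcc' ?_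
  have : (c - c') • g x = 0 := by rw [sub_smul]; linear_combination (norm := module) hx - hx'
  exact sub_eq_zero.1 ((smul_eq_zero.1 this).resolve_right hgx)

variable [MeasurableSpace X] {μ : Measure X}

lemma support_add_smul_ae_eq_of_measure_eq_zero {f g : X → E} {c : 𝕜}
    (hc : μ {x | g x ≠ 0 ∧ f x + c • g x = 0} = 0) :
    support (f + c • g) =ᵐ[μ] (support f ∪ support g : Set X) := by
  refine eventuallyEq_set.2 ?_
  filter_upwards [measure_eq_zero_iff_ae_notMem.1 hc] with x hx
  by_cases hgx : g x = 0 <;> simp_all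

theorem exists_measure_setOf_ne_zero_add_smul_eq_zero [Uncountable 𝕜] {f g : X → E}
    (hf : AEStronglyMeasurable f μ) (hg : AEFinStronglyMeasurable g μ) :
    ∃ c : 𝕜, μ {x | g x ≠ 0 ∧ f x + c • g x = 0} = 0 := by
  have hg' : AEStronglyMeasurable g μ :=
    ⟨hg.mk g, hg.finStronglyMeasurable_mk.stronglyMeasurable, hg.ae_eq_mk⟩
  obtain ⟨t, ht, hg_compl, _⟩ := hg.exists_set_sigmaFinite
  set A : 𝕜 → Set X := fun c ↦ {x | g x ≠ 0 ∧ f x + c • g x = 0}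
  have hA_meas (c : 𝕜) : NullMeasurableSet (A c) (μ.restrict t) :=
    (hg'.restrict.nullMeasurableSet_support).inter
      ((hf.restrict.add (hg'.restrict.const_smul c)).nullMeasurableSet_eq_fun
        aestronglyMeasurable_const)
  have hcount : {c | 0 < μ.restrict t (A c)}.Countable :=
    Measure.countable_meas_pos_of_disjoint_iUnion₀ hA_meas fun _ _ h ↦
      ((pairwise_disjoint_setOf_ne_zero_add_smul_eq_zero f g) h).aedisjoint
  obtain ⟨c, hc⟩ : ∃ c, c ∉ {c | 0 < μ.restrict t (A c)} :=
    (ne_univ_iff_exists_notMem _).1 fun h ↦ not_countable_univ (h ▸ hcount)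
  have h_in : μ.restrict t (A c) = 0 := by simpa using hc
  have h_out : μ.restrict tᶜ (A c) = 0 := measure_mono_null (fun _ hx ↦ hx.1) (ae_iff.1 hg_compl)
  refine ⟨c, ?_⟩
  rw [← Measure.restrict_add_restrict_compl (μ := μ) ht, Measure.add_apply, h_in, h_out, add_zero]

variable {p : ENNReal}

theorem Lp.exists_support_add_smul_ae_eq [Uncountable 𝕜] (hp₀ : p ≠ 0) (hp : p ≠ ⊤)
    (f g : Lp E p μ) :
    ∃ c : 𝕜, support ⇑(f + c • g) =ᵐ[μ] (support f ∪ support g : Set X) := by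
  obtain ⟨c, hc⟩ := exists_measure_setOf_ne_zero_add_smul_eq_zero (𝕜 := 𝕜)
    (Lp.aestronglyMeasurable f) ((Lp.memLp g).aefinStronglyMeasurable hp₀ hp)
  have h_coe : ⇑(f + c • g) =ᵐ[μ] ⇑f + c • ⇑g := by
    filter_upwards [Lp.coeFn_add f (c • g), Lp.coeFn_smul c g] with x h_add h_smul
    simp only [h_add, Pi.add_apply, h_smul, Pi.smul_apply]
  exact ⟨c, h_coe.support.trans (support_add_smul_ae_eq_of_measure_eq_zero hc)⟩

theorem Lp.exists_coeffs_support_sum_ae_eq_biUnion [Uncountable 𝕜] (hp₀ : p ≠ 0) (hp : p ≠ ⊤)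
    (ξ : ℕ → Lp E p μ) :
    ∃ l : ℕ → 𝕜, ∀ N : ℕ, support ⇑(∑ n ∈ Finset.Icc 1 N, l n • ξ n)
      =ᵐ[μ] ⋃ n ∈ Finset.Icc 1 N, support ⇑(ξ n) := by
  choose c hc using fun (S : Lp E p μ) (n : ℕ) ↦
    Lp.exists_support_add_smul_ae_eq (𝕜 := 𝕜) hp₀ hp S (ξ n)
  let S : ℕ → Lp E p μ := fun N ↦ Nat.rec 0 (fun n S ↦ S + c S (n + 1) • ξ (n + 1)) N
  refine ⟨fun n ↦ c (S (n - 1)) n, fun N ↦ ?_⟩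
  have h_sum : ∀ N, ∑ n ∈ Finset.Icc 1 N, c (S (n - 1)) n • ξ n = S N := by
    intro N
    induction N with
    | zero => rfl
    | succ N ih => rw [Finset.sum_Icc_succ_top (by omega), ih]; rfl
  rw [h_sum]
  induction N with
  | zero =>
    refine (Lp.coeFn_zero E p μ).support.trans ?_
    simp
  | succ N ih =>
    rw [← Finset.insert_Icc_right_eq_Icc_add_one (by omega), Finset.set_biUnion_insert, union_comm]
    exact (hc (S N) (N + 1)).trans (ih.union EventuallyEq.rfl)

end

/-- For any sequence `(ξ_n)_{n ≥ 1}` in `L²(X, μ)` there are constants `(λ_n)` such that for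
every `N`, the support of `∑_{n=1}^N λ_n ξ_n` equals `⋃_{n=1}^N supp(ξ_n)` up to a null set. -/
theorem exists_coeffs_support_eq_union {X : Type*} [MeasurableSpace X] (μ : Measure X)
    (ξ : ℕ → Lp ℂ 2 μ) :
    ∃ l : ℕ → ℂ, ∀ N : ℕ,
      μ (symmDiff (Function.support ⇑(∑ n ∈ Finset.Icc 1 N, l n • ξ n))
          (⋃ n ∈ Finset.Icc 1 N, Function.support ⇑(ξ n))) = 0 := by
  have : Uncountable ℂ := Complex.ofReal_injective.uncountable
  obtain ⟨l, hl⟩ :=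
    Lp.exists_coeffs_support_sum_ae_eq_biUnion (𝕜 := ℂ) two_ne_zero ENNReal.ofNat_ne_top ξ
  exact ⟨l, fun N ↦ measure_symmDiff_eq_zero_iff.2 (hl N)⟩
end

section
/- The ideal of compact operators K(ℓ²(ℕ)) is strictly contained in C_RC, and C_RC is strictly contained in B(ℓ²(ℕ)). -/
noncomputable section

/-- The Hilbert space `ℓ²(ℕ)`. -/
abbrev l2N : Type := lp (fun _ : ℕ => ℂ) 2

/-- The matrix entry `a_{n,m} = ⟨a δ_m, δ_n⟩`, i.e. the `n`-th coordinate of `a δ_m`. -/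
def entry (a : l2N →L[ℂ] l2N) (n m : ℕ) : ℂ := (a (lp.single 2 m 1)) n

/-- `a` is uniformly row and column finite: some `N` bounds the number of nonzero entries
in every column and every row of its matrix. -/
def RCFinite (a : l2N →L[ℂ] l2N) : Prop :=
  ∃ N : ℕ, ∀ m : ℕ,
    {n : ℕ | entry a n m ≠ 0}.encard ≤ (N : ℕ∞) ∧
    {n : ℕ | entry a m n ≠ 0}.encard ≤ (N : ℕ∞)

/-- `C_RC`, the operator-norm closure of the uniformly RC-finite operators. -/
def C_RC : Set (l2N →L[ℂ] l2N) := closure {a | RCFinite a}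

/-!
Cutting a compact operator `a` down to the finite matrix `P_k a P_j`, where `P_k` is the
coordinate projection onto `δ_0, …, δ_{k-1}`, approximates it in norm: `P_k → 1` strongly with
`‖P_k‖ ≤ 1`, so the convergence is uniform on the compact closure of the image of the unit ball,
giving `P_k a → a`; and `P_k a P_j → P_k a` follows by the same argument applied to the adjoint
`a† P_k`, which is compact because `P_k` has finite rank. The identity is RC-finite but not compact.

Mapping `δ_m` to the flat unit vector on the block `[m², (m+1)²)` gives an isometry outside `C_RC`:
a column with at most `N` nonzero entries stays at distance more than `1/√2` from the flat unit
vector on a block of `2N + 1` coordinates.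
-/

open Filter Topology Metric Finset
open scoped InnerProduct InnerProductSpace Function

section UniformOnCompact

variable {𝕜 E F ι : Type*} [RCLike 𝕜] [NormedAddCommGroup E] [NormedSpace 𝕜 E]
  [NormedAddCommGroup F] [NormedSpace 𝕜 F] {l : Filter ι} {P : ι → F →L[𝕜] F} {C : ℝ}

theorem eventually_forall_norm_apply_sub_lt_of_isCompact (hC : ∀ i, ‖P i‖ ≤ C)
    (hP : ∀ y, Tendsto (fun i => P i y) l (𝓝 y)) {K : Set F} (hK : IsCompact K)
    {ε : ℝ} (hε : 0 < ε) : ∀ᶠ i in l, ∀ y ∈ K, ‖P i y - y‖ < ε := by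
  set δ := ε / (|C| + 2)
  have hδ : 0 < δ := by positivity
  obtain ⟨t, -, ht, hKt⟩ := hK.finite_cover_balls hδ
  have hnet : ∀ᶠ i in l, ∀ z ∈ t, ‖P i z - z‖ < δ :=
    (eventually_all_finite ht).2 fun z _ =>
      (tendsto_iff_norm_sub_tendsto_zero.1 (hP z)).eventually (gt_mem_nhds hδ)
  filter_upwards [hnet] with i hi y hy
  obtain ⟨z, hz, hyz⟩ := Set.mem_iUnion₂.1 (hKt hy)
  rw [mem_ball, dist_eq_norm] at hyz
  have hPyz : ‖P i (y - z)‖ ≤ |C| * δ :=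
    ((P i).le_opNorm _).trans (mul_le_mul (le_abs.2 (Or.inl (hC i))) hyz.le
      (norm_nonneg _) (abs_nonneg C))
  calc ‖P i y - y‖ = ‖P i (y - z) - (y - z) + (P i z - z)‖ := by
        rw [map_sub]; congr 1; abel
    _ ≤ ‖P i (y - z)‖ + ‖y - z‖ + ‖P i z - z‖ :=
        norm_add_le_of_le (norm_sub_le _ _) le_rfl
    _ < |C| * δ + δ + δ := add_lt_add_of_le_of_lt (add_le_add hPyz hyz.le) (hi z hz)
    _ = ε := by simp only [δ]; field_simp; ring

theorem tendsto_comp_of_isCompactOperator (hC : ∀ i, ‖P i‖ ≤ C)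
    (hP : ∀ y, Tendsto (fun i => P i y) l (𝓝 y)) {a : E →L[𝕜] F} (ha : IsCompactOperator a) :
    Tendsto (fun i => (P i).comp a) l (𝓝 a) := by
  refine tendsto_iff_norm_sub_tendsto_zero.2 (Metric.tendsto_nhds.2 fun ε hε => ?_)
  filter_upwards [eventually_forall_norm_apply_sub_lt_of_isCompact hC hP
    (ha.isCompact_closure_image_closedBall 1) (half_pos hε)] with i hi
  rw [dist_zero_right, norm_norm]
  refine (ContinuousLinearMap.opNorm_le_of_unit_norm (half_pos hε).le fun x hx => ?_).trans_lt
    (half_lt_self hε)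
  exact (hi (a x) (subset_closure ⟨x, by simp [hx], rfl⟩)).le

end UniformOnCompact

def truncate (s : Finset ℕ) : l2N →L[ℂ] l2N :=
  ∑ i ∈ s, (lp.singleContinuousLinearMap ℂ _ 2 i).comp (lp.evalCLM ℂ _ 2 i)

theorem truncate_apply (s : Finset ℕ) (f : l2N) :
    truncate s f = ∑ i ∈ s, lp.single 2 i (f i) := by
  simp [truncate, lp.singleContinuousLinearMap_apply, lp.evalCLM]

theorem truncate_apply_apply (s : Finset ℕ) (f : l2N) (n : ℕ) :
    truncate s f n = if n ∈ s then f n else 0 := by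
  rw [truncate_apply, lp.coeFn_sum, Finset.sum_apply]
  simp only [lp.single_apply, Finset.sum_pi_single]

theorem truncate_single (s : Finset ℕ) (m : ℕ) (c : ℂ) :
    truncate s (lp.single 2 m c) = if m ∈ s then lp.single 2 m c else 0 := by
  ext n
  rw [truncate_apply_apply]
  by_cases hnm : n = m
  · subst hnm; split_ifs <;> simp
  · split_ifs <;> simp [hnm]

theorem isSelfAdjoint_truncate (s : Finset ℕ) : IsSelfAdjoint (truncate s) := by
  refine ContinuousLinearMap.isSelfAdjoint_iff'.2 ((ContinuousLinearMap.eq_adjoint_iff _ _).2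
    fun f g => ?_).symm
  simp only [truncate_apply, sum_inner, inner_sum, lp.inner_single_left, lp.inner_single_right]

theorem isIdempotentElem_truncate (s : Finset ℕ) : IsIdempotentElem (truncate s) := by
  ext f n
  simp only [mul_apply_eq_comp, truncate_apply_apply]
  split_ifs <;> rfl

theorem norm_truncate_le (s : Finset ℕ) : ‖truncate s‖ ≤ 1 :=
  IsStarProjection.norm_le _ ⟨isIdempotentElem_truncate s, isSelfAdjoint_truncate s⟩

theorem isCompactOperator_truncate (s : Finset ℕ) : IsCompactOperator (truncate s) :=
  show truncate s ∈ compactOperator (RingHom.id ℂ) l2N l2N from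
    Submodule.sum_mem _ fun i _ => show IsCompactOperator (_ ∘ _) from
      (isCompactOperator_of_locallyCompactSpace_rng (lp.singleContinuousLinearMap ℂ _ 2 i)).comp_clm
        (lp.evalCLM ℂ _ 2 i)

theorem tendsto_truncate_range (f : l2N) :
    Tendsto (fun k => truncate (range k) f) atTop (𝓝 f) := by
  simpa only [truncate_apply] using (lp.hasSum_single ENNReal.ofNat_ne_top f).tendsto_sum_nat

theorem rcFinite_of_entry_ne_zero {a : l2N →L[ℂ] l2N} (N : ℕ) (col row : ℕ → Finset ℕ)
    (hcol : ∀ m, #(col m) ≤ N) (hrow : ∀ n, #(row n) ≤ N)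
    (ha : ∀ n m, entry a n m ≠ 0 → n ∈ col m ∧ m ∈ row n) : RCFinite a := by
  refine ⟨N, fun m => ⟨?_, ?_⟩⟩
  · refine (Set.encard_le_encard (t := col m) fun n hn => (ha n m hn).1).trans ?_
    simpa [Set.encard_coe_eq_coe_finsetCard] using hcol m
  · refine (Set.encard_le_encard (t := row m) fun n hn => (ha m n hn).2).trans ?_
    simpa [Set.encard_coe_eq_coe_finsetCard] using hrow m

theorem rcFinite_id : RCFinite (ContinuousLinearMap.id ℂ l2N) :=
  rcFinite_of_entry_ne_zero 1 singleton singleton (fun _ => by simp) (fun _ => by simp)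
    fun n m h => by
      have : n = m := by by_contra hnm; exact h (by simp [entry, hnm])
      simp [this]

theorem rcFinite_truncate_comp_comp (a : l2N →L[ℂ] l2N) (k j : ℕ) :
    RCFinite (truncate (range k) ∘L a ∘L truncate (range j)) := by
  refine rcFinite_of_entry_ne_zero (max k j) (fun _ => range k) (fun _ => range j)
    (fun _ => by simp) (fun _ => by simp) fun n m h => ⟨?_, ?_⟩
  · by_contra hn
    exact h (by simp [entry, truncate_apply_apply, hn])
  · by_contra hm
    exact h (by simp [entry, truncate_single, hm])

theorem tendsto_truncate_comp (a : l2N →L[ℂ] l2N) (ha : IsCompactOperator a) :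
    Tendsto (fun k => truncate (range k) ∘L a) atTop (𝓝 a) :=
  tendsto_comp_of_isCompactOperator (fun _ => norm_truncate_le _) tendsto_truncate_range ha

theorem tendsto_comp_truncate (a : l2N →L[ℂ] l2N) (ha : IsCompactOperator (a†)) :
    Tendsto (fun j => a ∘L truncate (range j)) atTop (𝓝 a) := by
  have := ((ContinuousLinearMap.adjoint (𝕜 := ℂ) (E := l2N) (F := l2N)).continuous.tendsto _).comp
    (tendsto_truncate_comp _ ha)
  simpa [Function.comp_def, ContinuousLinearMap.adjoint_comp,
    (isSelfAdjoint_truncate _).adjoint_eq] using this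

theorem mem_C_RC_of_isCompactOperator {a : l2N →L[ℂ] l2N} (ha : IsCompactOperator a) :
    a ∈ C_RC := by
  have hrow (k : ℕ) : truncate (range k) ∘L a ∈ C_RC := by
    have hadj : IsCompactOperator ((truncate (range k) ∘L a)†) := by
      rw [ContinuousLinearMap.adjoint_comp, (isSelfAdjoint_truncate _).adjoint_eq]
      exact (isCompactOperator_truncate _).clm_comp (a†)
    exact mem_closure_of_tendsto (tendsto_comp_truncate _ hadj)
      (Eventually.of_forall fun j => rcFinite_truncate_comp_comp a k j)
  exact isClosed_closure.mem_of_tendsto (tendsto_truncate_comp a ha) (Eventually.of_forall hrow)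

theorem orthonormal_single : Orthonormal ℂ (fun n => (lp.single 2 n 1 : l2N)) :=
  orthonormal_iff_ite.2 fun i j => by simp [lp.inner_single_left, Pi.single_apply]

theorem not_isCompactOperator_id : ¬IsCompactOperator (ContinuousLinearMap.id ℂ l2N) := fun h =>
  have := FiniteDimensional.of_isCompactOperator_id (𝕜 := ℂ) h
  Module.Finite.not_linearIndependent_of_infinite _ orthonormal_single.linearIndependent

def blockVector (s : Finset ℕ) : l2N :=
  ((√(#s : ℝ))⁻¹ : ℂ) • ∑ i ∈ s, lp.single 2 i 1

theorem blockVector_apply (s : Finset ℕ) (n : ℕ) :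
    blockVector s n = if n ∈ s then ((√(#s : ℝ))⁻¹ : ℂ) else 0 := by
  simp only [blockVector, lp.coeFn_smul, lp.coeFn_sum, Pi.smul_apply, Finset.sum_apply,
    lp.single_apply, Finset.sum_pi_single]
  split_ifs <;> simp

theorem inner_blockVector_left (s : Finset ℕ) (f : l2N) :
    ⟪blockVector s, f⟫_ℂ = (√(#s : ℝ))⁻¹ * ∑ i ∈ s, f i := by
  simp [blockVector, lp.inner_single_left, mul_comm]

theorem inner_blockVector_self {s : Finset ℕ} (hs : s.Nonempty) :
    ⟪blockVector s, blockVector s⟫_ℂ = 1 := by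
  have hsqrt : ((√(#s : ℝ) : ℂ)) ^ 2 = #s := by
    rw [← Complex.ofReal_pow, Real.sq_sqrt (Nat.cast_nonneg _), Complex.ofReal_natCast]
  have hcard : (#s : ℂ) ≠ 0 := Nat.cast_ne_zero.2 hs.card_pos.ne'
  rw [inner_blockVector_left, Finset.sum_congr rfl fun i hi => by rw [blockVector_apply, if_pos hi],
    Finset.sum_const, nsmul_eq_mul]
  push_cast
  field_simp
  rw [hsqrt, div_self hcard]

theorem inner_blockVector_of_disjoint {s t : Finset ℕ} (hst : Disjoint s t) :
    ⟪blockVector s, blockVector t⟫_ℂ = 0 := by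
  rw [inner_blockVector_left, Finset.sum_eq_zero fun i hi => by
    rw [blockVector_apply, if_neg (Finset.disjoint_left.1 hst hi)], mul_zero]

theorem orthonormal_blockVector {ι : Type*} {s : ι → Finset ℕ} (hs : ∀ i, (s i).Nonempty)
    (hdisj : Pairwise (Disjoint on s)) : Orthonormal ℂ (fun i => blockVector (s i)) := by
  refine ⟨fun i => ?_, fun i j hij => inner_blockVector_of_disjoint (hdisj hij)⟩
  rw [@norm_eq_sqrt_re_inner ℂ, inner_blockVector_self (hs i)]
  simp

theorem sum_norm_sq_le_norm_sq (f : l2N) (t : Finset ℕ) : ∑ n ∈ t, ‖f n‖ ^ 2 ≤ ‖f‖ ^ 2 := by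
  simpa [Real.rpow_two] using lp.sum_rpow_le_norm_rpow (p := 2) (by norm_num) f t

theorem card_sub_div_card_le_norm_blockVector_sub_sq (s : Finset ℕ) {g : l2N} {N : ℕ}
    (hg : {n | g n ≠ 0}.encard ≤ N) : ((#s : ℝ) - N) / #s ≤ ‖blockVector s - g‖ ^ 2 := by
  obtain ⟨hfin, hcard⟩ := Set.encard_le_coe_iff_finite_ncard_le.1 hg
  set S := hfin.toFinset
  have hS : #S ≤ N := by rwa [← Set.ncard_eq_toFinset_card _ hfin]
  have hT : (#s : ℝ) - N ≤ #(s \ S) := by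
    have : #s ≤ #(s \ S) + N := (Finset.card_le_card_sdiff_add_card (t := S)).trans (by omega)
    rw [sub_le_iff_le_add]
    exact_mod_cast this
  have hval : ∀ n ∈ s \ S, ‖(blockVector s - g) n‖ ^ 2 = (#s : ℝ)⁻¹ := by
    intro n hn
    obtain ⟨hns, hnS⟩ := Finset.mem_sdiff.1 hn
    have hgn : g n = 0 := by simpa [S] using hnS
    rw [lp.coeFn_sub, Pi.sub_apply, hgn, sub_zero, blockVector_apply, if_pos hns, norm_inv,
      Complex.norm_real, Real.norm_of_nonneg (Real.sqrt_nonneg _), inv_pow,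
      Real.sq_sqrt (Nat.cast_nonneg _)]
  calc ((#s : ℝ) - N) / #s ≤ #(s \ S) * (#s : ℝ)⁻¹ := by
        rw [div_eq_mul_inv]; gcongr
    _ = ∑ n ∈ s \ S, ‖(blockVector s - g) n‖ ^ 2 := by
        rw [Finset.sum_congr rfl hval, Finset.sum_const, nsmul_eq_mul]
    _ ≤ ‖blockVector s - g‖ ^ 2 := sum_norm_sq_le_norm_sq _ _

def squareBlock (m : ℕ) : Finset ℕ := Ico (m ^ 2) ((m + 1) ^ 2)

theorem card_squareBlock (m : ℕ) : #(squareBlock m) = 2 * m + 1 := by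
  rw [squareBlock, Nat.card_Ico, show (m + 1) ^ 2 = m ^ 2 + (2 * m + 1) by ring,
    Nat.add_sub_cancel_left]

theorem sqrt_eq_of_mem_squareBlock {m n : ℕ} (hn : n ∈ squareBlock m) : Nat.sqrt n = m := by
  obtain ⟨h₁, h₂⟩ := Finset.mem_Ico.1 hn
  exact le_antisymm (Nat.lt_succ_iff.1 (Nat.sqrt_lt'.2 h₂)) (Nat.le_sqrt'.2 h₁)

theorem pairwise_disjoint_squareBlock : Pairwise (Disjoint on squareBlock) :=
  fun _ _ hmm' => Finset.disjoint_left.2 fun _ hn hn' =>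
    hmm' ((sqrt_eq_of_mem_squareBlock hn).symm.trans (sqrt_eq_of_mem_squareBlock hn'))

def blockIsometry : l2N →L[ℂ] l2N :=
  (orthonormal_blockVector (fun _ => Finset.card_pos.1 (by simp [card_squareBlock]))
    pairwise_disjoint_squareBlock).orthogonalFamily.linearIsometry.toContinuousLinearMap

theorem blockIsometry_single (m : ℕ) :
    blockIsometry (lp.single 2 m 1) = blockVector (squareBlock m) := by
  simp [blockIsometry]

theorem blockIsometry_notMem_C_RC : blockIsometry ∉ C_RC := by
  intro h
  obtain ⟨b, ⟨N, hN⟩, hb⟩ := Metric.mem_closure_iff.1 h (1 / 2) (by norm_num)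
  have hlow : (1 / 2 : ℝ) < ‖blockVector (squareBlock N) - b (lp.single 2 N 1)‖ ^ 2 := by
    refine lt_of_lt_of_le ?_ (card_sub_div_card_le_norm_blockVector_sub_sq _ (hN N).1)
    rw [card_squareBlock, lt_div_iff₀ (by positivity)]
    push_cast
    linarith
  have hup : ‖blockVector (squareBlock N) - b (lp.single 2 N 1)‖ < 1 / 2 := by
    rw [← blockIsometry_single, ← sub_apply]
    refine ((blockIsometry - b).le_opNorm _).trans_lt ?_
    rw [lp.norm_single (by norm_num), norm_one, mul_one, ← dist_eq_norm]
    exact hb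
  nlinarith [norm_nonneg (blockVector (squareBlock N) - b (lp.single 2 N 1))]

/-- `K(ℓ²(ℕ)) ⊊ C_RC ⊊ B(ℓ²(ℕ))`. -/
theorem compact_ssubset_CRC_ssubset_bounded :
    {a : l2N →L[ℂ] l2N | IsCompactOperator a} ⊂ C_RC ∧ C_RC ⊂ Set.univ :=
  ⟨(Set.ssubset_iff_of_subset fun _ => mem_C_RC_of_isCompactOperator).2
      ⟨_, subset_closure rcFinite_id, not_isCompactOperator_id⟩,
    (Set.ssubset_iff_of_subset (Set.subset_univ _)).2
      ⟨_, Set.mem_univ _, blockIsometry_notMem_C_RC⟩⟩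
end
end

section
/- Let f : [0,∞] → [0,∞] be an increasing function such that f(qx)·x ≤ f(x)·(qx) for every x ∈ (0,∞) and every rational q ≥ 1 (i.e., the slope-to-origin does not increase when the argument is multiplied by a rational q ≥ 1). Then f is continuous on (0,∞). -/
/-!
The slope condition says `f (q * x) ≤ q * f x` for rational `q ≥ 1`. Combined with monotonicity,
`x < q * y` gives `f x ≤ f (q * y) ≤ q * f y`, and `y < q * x` gives `f y ≤ q * f x`. Both hold for
all `y` near `x`, so near `x` the values of `f` lie between `f x / q` and `q * f x`; letting the
rational `q` decrease to `1` gives continuity at `x`, including the case `f x = ∞`.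
-/

open ENNReal Filter Topology

namespace ENNReal

theorem exists_rat_one_lt_ofReal_mul_lt {a b : ℝ≥0∞} (hab : a < b) :
    ∃ q : ℚ, 1 < q ∧ ENNReal.ofReal q * a < b := by
  rcases eq_or_ne a 0 with rfl | ha0
  · exact ⟨2, by norm_num, by simpa using hab⟩
  have hlt : 1 < b / a :=
    (ENNReal.lt_div_iff_mul_lt (.inl ha0) (.inl hab.ne_top)).mpr (by simpa using hab)
  obtain ⟨q, -, hq1, hqb⟩ := ENNReal.lt_iff_exists_rat_btwn.mp hlt
  refine ⟨q, ?_, ?_⟩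
  · have : (1 : ℝ) < q := ENNReal.one_lt_ofReal.mp (by simpa [ENNReal.ofReal] using hq1)
    exact_mod_cast this
  · simpa [ENNReal.ofReal] using ENNReal.mul_lt_of_lt_div hqb

theorem lt_ofReal_mul_self {x : ℝ≥0∞} (hx : 0 < x) (hx' : x < ⊤) {q : ℚ} (hq : 1 < q) :
    x < ENNReal.ofReal q * x := by
  have hQ : 1 < ENNReal.ofReal q := ENNReal.one_lt_ofReal.mpr (by exact_mod_cast hq)
  simpa using (ENNReal.mul_lt_mul_iff_left hx.ne' hx'.ne).mpr hQ

end ENNReal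

def RatSubhomogeneous (f : ℝ≥0∞ → ℝ≥0∞) : Prop :=
  ∀ x : ℝ≥0∞, 0 < x → x < ⊤ → ∀ q : ℚ, 1 ≤ q → f (ENNReal.ofReal q * x) ≤ ENNReal.ofReal q * f x

theorem apply_ofReal_mul_le_of_slope {f : ℝ≥0∞ → ℝ≥0∞} {x : ℝ≥0∞} {q : ℚ} (hx : 0 < x)
    (hx' : x < ⊤) (hslope : f (ENNReal.ofReal q * x) * x ≤ f x * (ENNReal.ofReal q * x)) :
    f (ENNReal.ofReal q * x) ≤ ENNReal.ofReal q * f x := by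
  rw [← mul_assoc, mul_comm (f x)] at hslope
  exact (ENNReal.mul_le_mul_iff_left hx.ne' hx'.ne).mp hslope

namespace RatSubhomogeneous

variable {f : ℝ≥0∞ → ℝ≥0∞} {x : ℝ≥0∞}

theorem eventually_lt_apply (hsub : RatSubhomogeneous f) (hmono : Monotone f) (hx : 0 < x)
    (hx' : x < ⊤) {a : ℝ≥0∞} (ha : a < f x) : ∀ᶠ y in 𝓝 x, a < f y := by
  obtain ⟨q, hq, hqa⟩ := exists_rat_one_lt_ofReal_mul_lt ha
  have hQy : Tendsto (fun y ↦ ENNReal.ofReal q * y) (𝓝 x) (𝓝 (ENNReal.ofReal q * x)) :=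
    (ENNReal.continuous_const_mul ofReal_ne_top).tendsto x
  filter_upwards [hQy.eventually_const_lt (lt_ofReal_mul_self hx hx' hq), eventually_lt_nhds hx']
    with y hxy hy
  have hy0 : 0 < y := pos_iff_ne_zero.mpr (by rintro rfl; simp at hxy)
  have hQ0 : ENNReal.ofReal q ≠ 0 :=
    (ENNReal.ofReal_pos.mpr (by exact_mod_cast zero_lt_one.trans hq)).ne'
  refine (ENNReal.mul_lt_mul_iff_right hQ0 ofReal_ne_top).mp ?_
  calc ENNReal.ofReal q * a < f x := hqa
    _ ≤ f (ENNReal.ofReal q * y) := hmono hxy.le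
    _ ≤ ENNReal.ofReal q * f y := hsub y hy0 hy q hq.le

theorem eventually_apply_lt (hsub : RatSubhomogeneous f) (hmono : Monotone f) (hx : 0 < x)
    (hx' : x < ⊤) {a : ℝ≥0∞} (ha : f x < a) : ∀ᶠ y in 𝓝 x, f y < a := by
  obtain ⟨q, hq, hqa⟩ := exists_rat_one_lt_ofReal_mul_lt ha
  filter_upwards [eventually_lt_nhds (lt_ofReal_mul_self hx hx' hq)] with y hy
  calc f y ≤ f (ENNReal.ofReal q * x) := hmono hy.le
    _ ≤ ENNReal.ofReal q * f x := hsub x hx hx' q hq.le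
    _ < a := hqa

theorem continuousOn_Ioo (hsub : RatSubhomogeneous f) (hmono : Monotone f) :
    ContinuousOn f (Set.Ioo 0 ⊤) := fun x ⟨hx, hx'⟩ ↦
  ContinuousAt.continuousWithinAt (x := x) <| tendsto_order.2
    ⟨fun _ ↦ hsub.eventually_lt_apply hmono hx hx', fun _ ↦ hsub.eventually_apply_lt hmono hx hx'⟩

end RatSubhomogeneous

/-- If `f : [0,∞] → [0,∞]` is increasing and the slope-to-origin does not increase when the
argument is multiplied by a rational `q ≥ 1`, then `f` is continuous on `(0,∞)`. -/
theorem continuousOn_of_slope_rat (f : ℝ≥0∞ → ℝ≥0∞) (hmono : Monotone f)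
    (h : ∀ x : ℝ≥0∞, 0 < x → x < ⊤ → ∀ q : ℚ, 1 ≤ q →
      f (ENNReal.ofReal (q : ℝ) * x) * x ≤ f x * (ENNReal.ofReal (q : ℝ) * x)) :
    ContinuousOn f (Set.Ioo 0 ⊤) :=
  RatSubhomogeneous.continuousOn_Ioo
    (fun x hx hx' q hq ↦ apply_ofReal_mul_le_of_slope hx hx' (h x hx hx' q hq)) hmono
end

section
/- Every ISOD function is the pointwise supremum of a sequence of ICOD functions: for every ISOD function f : [0,∞] → [0,∞] there exists a sequence (g_n)_{n∈ℕ} of ICOD functions with f(x) = sup_n g_n(x) for all x ∈ [0,∞]. -/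
open ENNReal

/-- `f : [0,∞] → [0,∞]` is ICOD: increasing, concave down, `f 0 = 0`, `f ∞ = sup_{t<∞} f t`. -/
def ICOD (f : ℝ≥0∞ → ℝ≥0∞) : Prop :=
  Monotone f ∧
  (∀ a b x y : ℝ≥0∞, a + b = 1 → a * f x + b * f y ≤ f (a * x + b * y)) ∧
  f 0 = 0 ∧
  f ⊤ = ⨆ t ∈ Set.Iio (⊤ : ℝ≥0∞), f t

/-- `f : [0,∞] → [0,∞]` is ISOD: increasing, `f 0 = 0`, `f ∞ = sup_{t<∞} f t`, and the
slope to the origin `f x / x` is decreasing: `x * f y ≤ y * f x` for `0 < x ≤ y < ∞`. -/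
def ISOD (f : ℝ≥0∞ → ℝ≥0∞) : Prop :=
  Monotone f ∧ f 0 = 0 ∧ (f ⊤ = ⨆ t ∈ Set.Iio (⊤ : ℝ≥0∞), f t) ∧
  ∀ x y : ℝ≥0∞, 0 < x → x ≤ y → y < ⊤ → x * f y ≤ y * f x

/-!
For finite `t`, the truncated secant `x ↦ min (f t / t * x) (f t)` is concave and increasing.
When `f` is ISOD it lies below `f` (decreasing slope for `x ≤ t`, monotonicity for `x ≥ t`) and
equals `f t` for `x ≥ t`. Taking `t` rational gives countably many such functions, and their
supremum recovers `f x`: for rationals `0 < q < x` the decreasing slope gives `q * f x ≤ x * f q`,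
and `q` can be taken arbitrarily close to `x`. At `x = ∞` this passes to the limit by the
condition `f ∞ = sup_{t<∞} f t`.
-/

lemma icod_min_mul_const (c M : ℝ≥0∞) : ICOD (fun x => min (c * x) M) := by
  refine ⟨fun x y hxy => min_le_min_right M (mul_le_mul_right hxy c),
    fun a b x y hab => le_min ?_ ?_, by simp, ?_⟩
  · calc a * min (c * x) M + b * min (c * y) M ≤ a * (c * x) + b * (c * y) := by
          gcongr <;> exact min_le_left _ _
      _ = c * (a * x + b * y) := by ring
  · calc a * min (c * x) M + b * min (c * y) M ≤ a * M + b * M := by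
          gcongr <;> exact min_le_right _ _
      _ = M := by rw [← add_mul, hab, one_mul]
  · refine le_antisymm ?_ (iSup₂_le fun t _ => min_le_min_right M (mul_le_mul_right le_top c))
    calc min (c * ⊤) M = ⨆ n : ℕ, min (c * n) M := by
          rw [← ENNReal.iSup_natCast, ENNReal.mul_iSup, iSup_inf_eq]
      _ ≤ ⨆ t ∈ Set.Iio ⊤, min (c * t) M :=
          iSup_le fun n => le_iSup₂_of_le (n : ℝ≥0∞) (natCast_lt_top n) le_rfl

noncomputable def secantCap (f : ℝ≥0∞ → ℝ≥0∞) (t : ℝ≥0∞) (x : ℝ≥0∞) : ℝ≥0∞ :=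
  min (f t / t * x) (f t)

lemma icod_secantCap (f : ℝ≥0∞ → ℝ≥0∞) (t : ℝ≥0∞) : ICOD (secantCap f t) :=
  icod_min_mul_const _ _

lemma secantCap_eq_of_le {f : ℝ≥0∞ → ℝ≥0∞} {t x : ℝ≥0∞} (h0 : t ≠ 0) (htop : t ≠ ⊤)
    (hx : t ≤ x) : secantCap f t x = f t := by
  refine min_eq_right ?_
  calc f t = f t / t * t := (ENNReal.div_mul_cancel h0 htop).symm
    _ ≤ f t / t * x := by gcongr

namespace ISOD

variable {f : ℝ≥0∞ → ℝ≥0∞}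

lemma secantCap_le (hf : ISOD f) {t : ℝ≥0∞} (ht : t < ⊤) (x : ℝ≥0∞) : secantCap f t x ≤ f x := by
  obtain ⟨hmono, hf0, -, hslope⟩ := hf
  rcases le_total x t with hxt | htx
  · refine (min_le_left _ _).trans ?_
    rcases eq_or_ne x 0 with rfl | hx0
    · simp
    calc f t / t * x = x * f t / t := by rw [mul_comm, mul_div_assoc]
      _ ≤ f x := ENNReal.div_le_of_le_mul' (hslope x t (pos_iff_ne_zero.2 hx0) hxt ht)
  · exact (min_le_right _ _).trans (hmono htx)

lemma le_iSup_secantCap_rat (hf : ISOD f) {x : ℝ≥0∞} (hx : x < ⊤) :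
    f x ≤ ⨆ q : ℚ, secantCap f (ENNReal.ofReal q) x := by
  obtain ⟨-, hf0, -, hslope⟩ := hf
  rcases eq_or_ne x 0 with rfl | hx0
  · simp [hf0]
  refine (ENNReal.mul_le_mul_iff_right hx0 hx.ne).mp <|
    ENNReal.mul_le_of_forall_lt fun a ha b hb => ?_
  obtain ⟨q, -, haq, hqx⟩ := ENNReal.lt_iff_exists_rat_btwn.mp ha
  have hq0 : ENNReal.ofReal q ≠ 0 := (zero_le.trans_lt haq).ne'
  calc a * b ≤ ENNReal.ofReal q * f x := mul_le_mul' haq.le hb.le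
    _ ≤ x * f (ENNReal.ofReal q) := hslope _ _ (pos_iff_ne_zero.2 hq0) hqx.le hx
    _ = x * secantCap f (ENNReal.ofReal q) x := by
        rw [secantCap_eq_of_le hq0 ofReal_ne_top hqx.le]
    _ ≤ x * ⨆ q : ℚ, secantCap f (ENNReal.ofReal q) x := by
        gcongr; exact le_iSup (fun q : ℚ => secantCap f (ENNReal.ofReal q) x) q

lemma eq_iSup_secantCap_rat (hf : ISOD f) (x : ℝ≥0∞) :
    f x = ⨆ q : ℚ, secantCap f (ENNReal.ofReal q) x := by
  refine le_antisymm ?_ (iSup_le fun q => hf.secantCap_le ofReal_lt_top x)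
  rcases lt_or_eq_of_le (le_top : x ≤ ⊤) with hx | rfl
  · exact hf.le_iSup_secantCap_rat hx
  rw [hf.2.2.1]
  exact iSup₂_le fun s hs => (hf.le_iSup_secantCap_rat hs).trans <|
    iSup_mono fun q => (icod_secantCap f _).1 le_top

end ISOD

/-- Every ISOD function is the pointwise supremum of a sequence of ICOD functions. -/
theorem isod_is_sup_of_icod (f : ℝ≥0∞ → ℝ≥0∞) (hf : ISOD f) :
    ∃ g : ℕ → ℝ≥0∞ → ℝ≥0∞, (∀ n, ICOD (g n)) ∧ ∀ x, f x = ⨆ n, g n x := by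
  obtain ⟨e, he⟩ := exists_surjective_nat ℚ
  refine ⟨fun n => secantCap f (ENNReal.ofReal (e n)), fun n => icod_secantCap f _, fun x => ?_⟩
  rw [hf.eq_iSup_secantCap_rat x]
  exact (he.iSup_comp fun q : ℚ => secantCap f (ENNReal.ofReal q) x).symm
end

section
/- Let f : (0,∞) → (0,∞) be an increasing function such that x ↦ f(x)/x is decreasing on (0,∞). Then f ≤ f_{**} ≤ 2f on (0,∞), where f_* is the concave conjugate of f and f_{**} = (f_*)_*. -/
/-!
The lower bound `g ≤ g_{**}` is the Fenchel inequality and holds for every `g`. For the upper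
bound take the slope `λ = f(x)/x` in the outer infimum: for `y ≤ x` monotonicity gives
`f(y) ≤ f(x)`, and for `y ≥ x` the decreasing slope gives `f(y) ≤ λ y`, so in both cases
`f(y) ≤ f(x) + λ y`. Hence `f_*(λ) ≥ -f(x)` and `f_{**}(x) ≤ λ x + f(x) = 2 f(x)`.
-/

noncomputable section

/-- The (half-line) concave conjugate `g_*(x) = inf_{λ > 0} (λ·x − g(λ))`,
computed in the extended reals. -/
def concaveConj (g : ℝ → EReal) : ℝ → EReal :=
  fun x => ⨅ l : {l : ℝ // 0 < l}, (((l.1 * x : ℝ) : EReal) - g l.1)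

theorem EReal.coe_sub_coe_sub_cancel (a : ℝ) (b : EReal) : (a : EReal) - (a - b) = b := by
  induction b using EReal.rec with
  | bot => simp
  | top => simp
  | coe b => norm_cast; ring

section ConcaveConj

variable (g : ℝ → EReal)

theorem concaveConj_le {x l : ℝ} (hx : 0 < x) :
    concaveConj g l ≤ ((x * l : ℝ) : EReal) - g x :=
  iInf_le_of_le ⟨x, hx⟩ le_rfl

theorem le_concaveConj_iff {c : EReal} {l : ℝ} :
    c ≤ concaveConj g l ↔ ∀ y, 0 < y → c ≤ ((y * l : ℝ) : EReal) - g y := by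
  simp only [concaveConj, le_iInf_iff, Subtype.forall]

theorem le_concaveConj_concaveConj {x : ℝ} (hx : 0 < x) :
    g x ≤ concaveConj (concaveConj g) x := by
  refine (le_concaveConj_iff _).2 fun l _ => ?_
  calc g x = ((l * x : ℝ) : EReal) - (((x * l : ℝ) : EReal) - g x) := by
        rw [mul_comm, EReal.coe_sub_coe_sub_cancel]
    _ ≤ ((l * x : ℝ) : EReal) - concaveConj g l :=
        EReal.sub_le_sub le_rfl (concaveConj_le g hx)

end ConcaveConj

theorem le_add_div_mul_of_mono_of_slope {f : ℝ → ℝ}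
    (hmono : ∀ x y : ℝ, 0 < x → x ≤ y → f x ≤ f y)
    (hslope : ∀ x y : ℝ, 0 < x → x ≤ y → f y * x ≤ f x * y)
    {x y : ℝ} (hx : 0 < x) (hy : 0 < y) (hfx : 0 ≤ f x) :
    f y ≤ f x + f x / x * y := by
  have hratio_mul : 0 ≤ f x / x * y := by positivity
  rcases le_total y x with hyx | hxy
  · linarith [hmono y x hy hyx]
  · have : f y ≤ f x / x * y := by
      rw [div_mul_eq_mul_div, le_div_iff₀ hx]
      linarith [hslope x y hx hxy]
    linarith

theorem neg_le_concaveConj_div_self {f : ℝ → ℝ}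
    (hmono : ∀ x y : ℝ, 0 < x → x ≤ y → f x ≤ f y)
    (hslope : ∀ x y : ℝ, 0 < x → x ≤ y → f y * x ≤ f x * y)
    {x : ℝ} (hx : 0 < x) (hfx : 0 ≤ f x) :
    ((-f x : ℝ) : EReal) ≤ concaveConj (fun y => (f y : EReal)) (f x / x) := by
  refine (le_concaveConj_iff _).2 fun y hy => ?_
  rw [← EReal.coe_sub, EReal.coe_le_coe_iff]
  linarith [le_add_div_mul_of_mono_of_slope hmono hslope hx hy hfx]

/-- If `f : (0,∞) → (0,∞)` is increasing with `f(x)/x` decreasing, then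
`f ≤ f_{**} ≤ 2f` on `(0,∞)`. -/
theorem le_biconjugate_le_two_mul (f : ℝ → ℝ)
    (hpos : ∀ x : ℝ, 0 < x → 0 < f x)
    (hmono : ∀ x y : ℝ, 0 < x → x ≤ y → f x ≤ f y)
    (hslope : ∀ x y : ℝ, 0 < x → x ≤ y → f y * x ≤ f x * y) :
    ∀ x : ℝ, 0 < x →
      (f x : EReal) ≤ concaveConj (concaveConj (fun y => (f y : EReal))) x ∧
      concaveConj (concaveConj (fun y => (f y : EReal))) x ≤ ((2 * f x : ℝ) : EReal) := by
  intro x hx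
  refine ⟨le_concaveConj_concaveConj (fun y => (f y : EReal)) hx, ?_⟩
  have hratio : 0 < f x / x := div_pos (hpos x hx) hx
  calc concaveConj (concaveConj (fun y => (f y : EReal))) x
      ≤ ((f x / x * x : ℝ) : EReal) - concaveConj (fun y => (f y : EReal)) (f x / x) :=
        concaveConj_le _ hratio
    _ ≤ ((f x / x * x : ℝ) : EReal) - ((-f x : ℝ) : EReal) :=
        EReal.sub_le_sub le_rfl
          (neg_le_concaveConj_div_self hmono hslope hx (hpos x hx).le)
    _ = ((2 * f x : ℝ) : EReal) := by
        rw [div_mul_cancel₀ _ hx.ne', ← EReal.coe_sub]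
        ring_nf
end
end

section
/- Let f₀ : [0,1] → [0,1] satisfy: (1) f₀ is increasing; (2) f₀ is concave down; (3) x < f₀(x) < 1 for all 0 < x < 1; (4) lim_{x→0⁺} f₀(x) = 0; (5) for all integers n > m ≥ 0, lim_{x→0⁺} f₀^{(n)}(x)/f₀^{(m)}(x) = ∞. Then there exists a family (f_α) indexed by the countable ordinals α < ω₁, with f at index 0 equal to f₀, such that every f_α satisfies properties (1)–(5), and for all ordinals α < β < ω₁ and every n ∈ ℕ, lim_{x→0⁺} f_β(x)/f_α^{(n)}(x) = ∞. -/
open Filter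

/-- A function `[0,1] → [0,1]` satisfying properties (1)–(5) of
Proposition about transfinite chains of constraint functions: increasing on `[0,1]`,
concave down on `[0,1]`, `x < f x < 1` on `(0,1)`, `lim_{x→0⁺} f x = 0`, and
`lim_{x→0⁺} f^{(n)}(x)/f^{(m)}(x) = ∞` for all `n > m ≥ 0`. -/
def GoodFn (f : ℝ → ℝ) : Prop :=
  (∀ x ∈ Set.Icc (0:ℝ) 1, f x ∈ Set.Icc (0:ℝ) 1) ∧
  (∀ x ∈ Set.Icc (0:ℝ) 1, ∀ y ∈ Set.Icc (0:ℝ) 1, x ≤ y → f x ≤ f y) ∧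
  (∀ x ∈ Set.Icc (0:ℝ) 1, ∀ y ∈ Set.Icc (0:ℝ) 1, ∀ t ∈ Set.Icc (0:ℝ) 1,
    t * f x + (1 - t) * f y ≤ f (t * x + (1 - t) * y)) ∧
  (∀ x ∈ Set.Ioo (0:ℝ) 1, x < f x ∧ f x < 1) ∧
  Tendsto f (nhdsWithin 0 (Set.Ioi 0)) (nhds 0) ∧
  (∀ n m : ℕ, m < n →
    Tendsto (fun x => f^[n] x / f^[m] x) (nhdsWithin 0 (Set.Ioi 0)) atTop)

/-!
Everything rests on one step: for countably many good functions `g` there is a good `H`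
dominating every iterate `g^{(n)}` at `0⁺`. Take for `H` the least nondecreasing concave
majorant of the parabola `y (2 - y)` on `[0, 1]` together with the graphs of the functions
`k · g^{(n)}` (`k ∈ ℕ`), each restricted to an interval `(0, u]` on which it stays below `1/4`.
The parabola gives `x < H x < 1`; shrinking the intervals so that only finitely many pieces
exceed any given `ε > 0` keeps `H (0⁺) = 0`. Dominating `k · id` as well gives `H x / x → ∞`,
and hence property (5). Since every `β < ω₁` has countably many predecessors, transfinite
recursion builds the chain.
-/

open Set Topology

lemma tendsto_div_atTop_of_forall_eventually_mul_le {α : Type*} {l : Filter α} {f g : α → ℝ}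
    (hg : ∀ᶠ x in l, 0 < g x) (h : ∀ k : ℕ, ∀ᶠ x in l, k * g x ≤ f x) :
    Tendsto (fun x => f x / g x) l atTop := by
  refine tendsto_atTop.2 fun b => ?_
  filter_upwards [hg, h ⌈b⌉₊] with x hgx hx
  rw [le_div_iff₀ hgx]
  exact (mul_le_mul_of_nonneg_right (Nat.le_ceil b) hgx.le).trans hx

lemma exists_pos_tendsto_cofinite_zero (ι : Type*) [Countable ι] :
    ∃ ε : ι → ℝ, (∀ i, 0 < ε i) ∧ Tendsto ε cofinite (𝓝 0) := by
  obtain ⟨e, he⟩ := Countable.exists_injective_nat ι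
  exact ⟨fun i => 1 / ((e i : ℝ) + 1), fun i => by positivity,
    tendsto_one_div_add_atTop_nhds_zero_nat.comp (Nat.cofinite_eq_atTop ▸ he.tendsto_cofinite)⟩

lemma Ordinal.countable_Iio_of_lt_ord_aleph_one {β : Ordinal} (hβ : β < (Cardinal.aleph 1).ord) :
    (Iio β).Countable := by
  rw [← Cardinal.le_aleph0_iff_set_countable, Cardinal.mk_Iio_ordinal, Cardinal.lift_le_aleph0,
    ← Cardinal.lt_aleph_one_iff]
  exact Cardinal.lt_ord.1 hβ

section Iterate

variable {l : Filter ℝ} {f : ℝ → ℝ}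

lemma tendsto_iterate_div_self (hf : Tendsto f l l) (hl : ∀ᶠ y in l, y ≠ 0)
    (hdiv : Tendsto (fun y => f y / y) l atTop) {k : ℕ} (hk : 0 < k) :
    Tendsto (fun y => f^[k] y / y) l atTop := by
  induction k, hk using Nat.le_induction with
  | base => simpa using hdiv
  | succ k _ ih =>
    refine ((hdiv.comp (hf.iterate k)).atTop_mul_atTop₀ ih).congr' ?_
    filter_upwards [(hf.iterate k).eventually hl] with y hy
    simp only [Function.comp_apply, Function.iterate_succ_apply']
    field_simp

lemma tendsto_iterate_div_iterate (hf : Tendsto f l l) (hl : ∀ᶠ y in l, y ≠ 0)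
    (hdiv : Tendsto (fun y => f y / y) l atTop) {m n : ℕ} (hmn : m < n) :
    Tendsto (fun y => f^[n] y / f^[m] y) l atTop := by
  obtain ⟨k, hk, rfl⟩ : ∃ k, 0 < k ∧ n = k + m := ⟨n - m, by omega, by omega⟩
  simpa only [Function.iterate_add_apply, Function.comp_def] using
    (tendsto_iterate_div_self hf hl hdiv hk).comp (hf.iterate m)

end Iterate

lemma tendsto_nhdsGT_zero_of_forall_lt {f : ℝ → ℝ} (hlt : ∀ x ∈ Ioo (0:ℝ) 1, x < f x)
    (h0 : Tendsto f (𝓝[>] 0) (𝓝 0)) : Tendsto f (𝓝[>] 0) (𝓝[>] 0) :=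
  tendsto_nhdsWithin_iff.2 ⟨h0, by
    filter_upwards [Ioo_mem_nhdsGT one_pos] with x hx using hx.1.trans (hlt x hx)⟩

lemma GoodFn.tendsto_nhdsGT {f : ℝ → ℝ} (hf : GoodFn f) : Tendsto f (𝓝[>] 0) (𝓝[>] 0) :=
  tendsto_nhdsGT_zero_of_forall_lt (fun x hx => (hf.2.2.2.1 x hx).1) hf.2.2.2.2.1

lemma goodFn_of_tendsto_div_self {f : ℝ → ℝ} (hmaps : MapsTo f (Icc 0 1) (Icc 0 1))
    (hmono : MonotoneOn f (Icc 0 1)) (hconc : ConcaveOn ℝ (Icc 0 1) f)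
    (hbounds : ∀ x ∈ Ioo (0:ℝ) 1, x < f x ∧ f x < 1) (h0 : Tendsto f (𝓝[>] 0) (𝓝 0))
    (hdiv : Tendsto (fun x => f x / x) (𝓝[>] 0) atTop) : GoodFn f := by
  have hf := tendsto_nhdsGT_zero_of_forall_lt (fun x hx => (hbounds x hx).1) h0
  have hl : ∀ᶠ y in 𝓝[>] (0:ℝ), y ≠ 0 := eventually_mem_nhdsWithin.mono fun _ hy => ne_of_gt hy
  refine ⟨hmaps, fun x hx y hy hxy => hmono hx hy hxy, fun x hx y hy t ht => ?_, hbounds, h0,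
    fun n m hmn => tendsto_iterate_div_iterate hf hl hdiv hmn⟩
  simpa using hconc.2 hx hy ht.1 (sub_nonneg.2 ht.2) (add_sub_cancel t 1)

section ConcaveMajorant

/-- A pair `p = (a, b)` stands for the affine function `y ↦ a + b * y`. -/
def monotoneAffineMajorants (T : Set (ℝ × ℝ)) : Set (ℝ × ℝ) :=
  {p | 0 ≤ p.2 ∧ ∀ q ∈ T, q.2 ≤ p.1 + p.2 * q.1}

noncomputable def concaveMajorant (T : Set (ℝ × ℝ)) (x : ℝ) : ℝ :=
  ⨅ p : monotoneAffineMajorants T, p.1.1 + p.1.2 * x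

variable {T : Set (ℝ × ℝ)} {p : ℝ × ℝ} {x : ℝ}

lemma affine_nonneg_of_mem_monotoneAffineMajorants (h0 : ((0:ℝ), (0:ℝ)) ∈ T)
    (hp : p ∈ monotoneAffineMajorants T) (hx : 0 ≤ x) : 0 ≤ p.1 + p.2 * x := by
  have hp0 := hp.2 _ h0
  simp only [mul_zero, add_zero] at hp0
  exact add_nonneg hp0 (mul_nonneg hp.1 hx)

lemma concaveMajorant_le (h0 : ((0:ℝ), (0:ℝ)) ∈ T) (hp : p ∈ monotoneAffineMajorants T)
    (hx : 0 ≤ x) : concaveMajorant T x ≤ p.1 + p.2 * x :=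
  ciInf_le ⟨0, by rintro _ ⟨p', rfl⟩; exact affine_nonneg_of_mem_monotoneAffineMajorants h0 p'.2 hx⟩
    (⟨p, hp⟩ : monotoneAffineMajorants T)

lemma le_concaveMajorant_of_forall_le (hne : (monotoneAffineMajorants T).Nonempty) {v : ℝ}
    (h : ∀ p ∈ monotoneAffineMajorants T, v ≤ p.1 + p.2 * x) : v ≤ concaveMajorant T x :=
  have := hne.to_subtype
  le_ciInf fun p => h p.1 p.2

lemma le_concaveMajorant (hne : (monotoneAffineMajorants T).Nonempty) {q : ℝ × ℝ} (hq : q ∈ T) :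
    q.2 ≤ concaveMajorant T q.1 :=
  le_concaveMajorant_of_forall_le hne fun _ hp => hp.2 q hq

lemma concaveMajorant_nonneg (h0 : ((0:ℝ), (0:ℝ)) ∈ T) (hne : (monotoneAffineMajorants T).Nonempty)
    (hx : 0 ≤ x) : 0 ≤ concaveMajorant T x :=
  le_concaveMajorant_of_forall_le hne fun _ hp =>
    affine_nonneg_of_mem_monotoneAffineMajorants h0 hp hx

lemma monotoneOn_concaveMajorant (h0 : ((0:ℝ), (0:ℝ)) ∈ T)
    (hne : (monotoneAffineMajorants T).Nonempty) : MonotoneOn (concaveMajorant T) (Ici 0) := by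
  intro x hx y _ hxy
  refine le_concaveMajorant_of_forall_le hne fun p hp => ?_
  calc concaveMajorant T x ≤ p.1 + p.2 * x := concaveMajorant_le h0 hp hx
    _ ≤ p.1 + p.2 * y := by gcongr; exact hp.1

lemma concaveOn_concaveMajorant (h0 : ((0:ℝ), (0:ℝ)) ∈ T)
    (hne : (monotoneAffineMajorants T).Nonempty) : ConcaveOn ℝ (Ici 0) (concaveMajorant T) := by
  refine ⟨convex_Ici 0, fun x hx y hy a b ha hb hab =>
    le_concaveMajorant_of_forall_le hne fun p hp => ?_⟩
  calc a • concaveMajorant T x + b • concaveMajorant T y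
      ≤ a • (p.1 + p.2 * x) + b • (p.1 + p.2 * y) := by
        gcongr
        exacts [concaveMajorant_le h0 hp hx, concaveMajorant_le h0 hp hy]
    _ = p.1 + p.2 * (a • x + b • y) := by
        simp only [smul_eq_mul]
        linear_combination p.1 * hab

lemma tendsto_concaveMajorant_nhdsGT_zero (h0 : ((0:ℝ), (0:ℝ)) ∈ T)
    (hT : ∀ q ∈ T, 0 ≤ q.1 ∧ q.2 ≤ 1) (hsmall : ∀ ε > 0, ∃ δ > 0, ∀ q ∈ T, q.1 ≤ δ → q.2 ≤ ε) :
    Tendsto (concaveMajorant T) (𝓝[>] 0) (𝓝 0) := by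
  refine Metric.tendsto_nhds.2 fun ε hε => ?_
  obtain ⟨δ, hδ, hTδ⟩ := hsmall (ε / 2) (half_pos hε)
  -- the line `ε / 2 + y / δ` lies above `T`: below `δ` by the choice of `δ`, beyond it as `T ≤ 1`
  have hp : (ε / 2, δ⁻¹) ∈ monotoneAffineMajorants T := by
    refine ⟨inv_nonneg.2 hδ.le, fun q hq => ?_⟩
    rcases le_or_gt q.1 δ with hqδ | hqδ
    · have : 0 ≤ δ⁻¹ * q.1 := mul_nonneg (inv_nonneg.2 hδ.le) (hT q hq).1
      linarith [hTδ q hq hqδ]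
    · have : 1 < δ⁻¹ * q.1 := by rwa [inv_mul_eq_div, one_lt_div hδ]
      linarith [(hT q hq).2]
  filter_upwards [Ioo_mem_nhdsGT (show (0:ℝ) < δ * (ε / 2) by positivity)] with x hx
  have hle := concaveMajorant_le h0 hp hx.1.le
  have hnn := concaveMajorant_nonneg h0 ⟨_, hp⟩ hx.1.le
  have : δ⁻¹ * x < ε / 2 := by rw [inv_mul_lt_iff₀ hδ]; exact hx.2
  rw [Real.dist_eq, sub_zero, abs_of_nonneg hnn]
  linarith

end ConcaveMajorant

section Domination

variable {ι : Type*}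

def dominationPoints (c : ι → ℝ → ℝ) (u : ι → ℝ) : Set (ℝ × ℝ) :=
  (fun y => (y, y * (2 - y))) '' Icc 0 1 ∪ ⋃ i, (fun y => (y, c i y)) '' Ioc 0 (u i)

variable {c : ι → ℝ → ℝ} {u : ι → ℝ}

lemma zero_mem_dominationPoints : ((0:ℝ), (0:ℝ)) ∈ dominationPoints c u :=
  Or.inl ⟨0, left_mem_Icc.2 zero_le_one, by norm_num⟩

lemma nonneg_and_le_one_of_mem_dominationPoints (hc : ∀ i, ∀ y ∈ Ioc 0 (u i), c i y ≤ 1 / 4)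
    {q : ℝ × ℝ} (hq : q ∈ dominationPoints c u) : 0 ≤ q.1 ∧ q.2 ≤ 1 := by
  rcases hq with ⟨y, hy, rfl⟩ | hq
  · exact ⟨hy.1, by dsimp only; nlinarith [sq_nonneg (1 - y)]⟩
  · obtain ⟨i, y, hy, rfl⟩ := mem_iUnion.1 hq
    exact ⟨hy.1.le, (hc i y hy).trans (by norm_num)⟩

lemma tangent_mem_monotoneAffineMajorants (hc : ∀ i, ∀ y ∈ Ioc 0 (u i), c i y ≤ 1 / 4)
    {t : ℝ} (ht : t ∈ Icc (1 / 2 : ℝ) 1) :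
    (t ^ 2, 2 - 2 * t) ∈ monotoneAffineMajorants (dominationPoints c u) := by
  refine ⟨by linarith [ht.2], ?_⟩
  rintro _ (⟨y, -, rfl⟩ | hq)
  · dsimp only
    nlinarith [sq_nonneg (t - y)]
  · obtain ⟨i, y, hy, rfl⟩ := mem_iUnion.1 hq
    dsimp only
    nlinarith [hc i y hy, hy.1, ht.1, ht.2]

lemma exists_pos_dominationPoints_le {ε : ι → ℝ} (hε : Tendsto ε cofinite (𝓝 0))
    (hcε : ∀ i, ∀ y ∈ Ioc 0 (u i), c i y ≤ ε i) (hc : ∀ i, Tendsto (c i) (𝓝[>] 0) (𝓝 0))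
    {r : ℝ} (hr : 0 < r) : ∃ δ > 0, ∀ q ∈ dominationPoints c u, q.1 ≤ δ → q.2 ≤ r := by
  -- only finitely many `c i` are not already bounded by `r` on `(0, u i]`
  have hfin : {i | ¬ ε i < r}.Finite :=
    eventually_cofinite.1 (hε.eventually (eventually_lt_nhds hr))
  have hev : ∀ᶠ y in 𝓝[>] 0, ∀ i ∈ {i | ¬ ε i < r}, c i y ≤ r :=
    (eventually_all_finite hfin).2 fun i _ => (hc i).eventually (eventually_le_nhds hr)
  obtain ⟨δ, hδ, hδsub⟩ := mem_nhdsGT_iff_exists_Ioc_subset.1 hev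
  refine ⟨min (r / 2) δ, lt_min (half_pos hr) hδ, ?_⟩
  rintro _ (⟨y, hy, rfl⟩ | hq) hyδ
  · dsimp only at hyδ ⊢
    nlinarith [min_le_left (r / 2) δ, hy.1]
  · obtain ⟨i, y, hy, rfl⟩ := mem_iUnion.1 hq
    dsimp only at hyδ ⊢
    by_cases hi : ε i < r
    · exact (hcε i y hy).trans hi.le
    · exact hδsub ⟨hy.1, hyδ.trans (min_le_right _ _)⟩ i hi

lemma exists_concaveOn_eventually_ge [Countable ι] (c : ι → ℝ → ℝ)
    (hc : ∀ i, Tendsto (c i) (𝓝[>] 0) (𝓝 0)) :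
    ∃ H : ℝ → ℝ, MapsTo H (Icc 0 1) (Icc 0 1) ∧ MonotoneOn H (Icc 0 1) ∧
      ConcaveOn ℝ (Icc 0 1) H ∧ (∀ x ∈ Ioo (0:ℝ) 1, x < H x ∧ H x < 1) ∧
      Tendsto H (𝓝[>] 0) (𝓝 0) ∧ ∀ i, c i ≤ᶠ[𝓝[>] 0] H := by
  obtain ⟨ε, hε_pos, hε⟩ := exists_pos_tendsto_cofinite_zero ι
  choose u hu_pos hu using fun i => mem_nhdsGT_iff_exists_Ioc_subset.1
    ((hc i).eventually (eventually_le_nhds (lt_min (hε_pos i) (show (0:ℝ) < 1 / 4 by norm_num))))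
  have hquarter : ∀ i, ∀ y ∈ Ioc 0 (u i), c i y ≤ 1 / 4 :=
    fun i y hy => (hu i hy).trans (min_le_right _ _)
  set T := dominationPoints c u
  have h0 : ((0:ℝ), (0:ℝ)) ∈ T := zero_mem_dominationPoints
  have htangent : ∀ t ∈ Icc (1 / 2 : ℝ) 1, (t ^ 2, 2 - 2 * t) ∈ monotoneAffineMajorants T :=
    fun t ht => tangent_mem_monotoneAffineMajorants hquarter ht
  have hne : (monotoneAffineMajorants T).Nonempty := ⟨_, htangent 1 ⟨by norm_num, le_rfl⟩⟩
  have hsmall : ∀ r > 0, ∃ δ > 0, ∀ q ∈ T, q.1 ≤ δ → q.2 ≤ r := fun r =>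
    exists_pos_dominationPoints_le hε (fun i y hy => (hu i hy).trans (min_le_left _ _)) hc
  refine ⟨concaveMajorant T, fun x hx => ⟨concaveMajorant_nonneg h0 hne hx.1, ?_⟩,
    (monotoneOn_concaveMajorant h0 hne).mono Icc_subset_Ici_self,
    (concaveOn_concaveMajorant h0 hne).subset Icc_subset_Ici_self (convex_Icc 0 1),
    fun x hx => ⟨?_, ?_⟩,
    tendsto_concaveMajorant_nhdsGT_zero h0
      (fun q => nonneg_and_le_one_of_mem_dominationPoints hquarter) hsmall,
    fun i => ?_⟩
  · simpa using concaveMajorant_le h0 (htangent 1 ⟨by norm_num, le_rfl⟩) hx.1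
  · have hpar := le_concaveMajorant hne
      (show (x, x * (2 - x)) ∈ T from Or.inl ⟨x, Ioo_subset_Icc_self hx, rfl⟩)
    nlinarith [hx.1, hx.2]
  · -- the tangent to the parabola at `(1 + x) / 2` has value `(1 + 6 x - 3 x²) / 4 < 1` at `x`
    have hle := concaveMajorant_le h0
      (htangent ((1 + x) / 2) ⟨by linarith [hx.1], by linarith [hx.2]⟩) hx.1.le
    nlinarith [hx.2]
  · filter_upwards [Ioc_mem_nhdsGT (hu_pos i)] with y hy using
      le_concaveMajorant hne (show (y, c i y) ∈ T from Or.inr (mem_iUnion.2 ⟨i, y, hy, rfl⟩))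

theorem exists_goodFn_tendsto_div_atTop [Countable ι] (φ : ι → ℝ → ℝ)
    (hφ : ∀ i, Tendsto (φ i) (𝓝[>] 0) (𝓝[>] 0)) :
    ∃ H, GoodFn H ∧ ∀ i, Tendsto (fun x => H x / φ i x) (𝓝[>] 0) atTop := by
  -- adjoin the identity, whose domination gives property (5)
  let ψ : Option ι → ℝ → ℝ := fun j => j.elim id φ
  have hψ : ∀ j, Tendsto (ψ j) (𝓝[>] 0) (𝓝[>] 0) := fun j => j.rec tendsto_id hφ
  obtain ⟨H, hmaps, hmono, hconc, hbounds, h0, hge⟩ :=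
    exists_concaveOn_eventually_ge (fun jk : Option ι × ℕ => fun x => jk.2 * ψ jk.1 x) fun jk => by
      simpa using ((hψ jk.1).mono_right nhdsWithin_le_nhds).const_mul (jk.2 : ℝ)
  have hdiv : ∀ j, Tendsto (fun x => H x / ψ j x) (𝓝[>] 0) atTop := fun j =>
    tendsto_div_atTop_of_forall_eventually_mul_le (tendsto_nhdsWithin_iff.1 (hψ j)).2
      fun k => hge (j, k)
  exact ⟨H, goodFn_of_tendsto_div_self hmaps hmono hconc hbounds h0 (hdiv none),
    fun i => hdiv (some i)⟩

end Domination

theorem exists_goodFn_tendsto_div_iterate_atTop {𝒢 : Set (ℝ → ℝ)} (h𝒢 : 𝒢.Countable)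
    (hgood : ∀ g ∈ 𝒢, GoodFn g) :
    ∃ H, GoodFn H ∧ ∀ g ∈ 𝒢, ∀ n : ℕ, Tendsto (fun x => H x / g^[n] x) (𝓝[>] 0) atTop := by
  have := h𝒢.to_subtype
  obtain ⟨H, hH, hdiv⟩ := exists_goodFn_tendsto_div_atTop (fun gn : 𝒢 × ℕ => gn.1.1^[gn.2])
    fun gn => (hgood _ gn.1.2).tendsto_nhdsGT.iterate gn.2
  exact ⟨H, hH, fun g hg n => hdiv (⟨g, hg⟩, n)⟩

section TransfiniteChain

variable {X : Type*} (x₀ : X) (next : Set X → X)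

noncomputable def transfiniteChain (β : Ordinal) : X :=
  if β = 0 then x₀ else next (range fun α : Iio β => transfiniteChain α)
termination_by β
decreasing_by exact α.2

lemma transfiniteChain_zero : transfiniteChain x₀ next 0 = x₀ := by
  rw [transfiniteChain, if_pos rfl]

lemma transfiniteChain_of_ne_zero {β : Ordinal} (hβ : β ≠ 0) :
    transfiniteChain x₀ next β = next (range fun α : Iio β => transfiniteChain x₀ next α) := by
  rw [transfiniteChain, if_neg hβ]

variable {x₀ next}

lemma countable_range_transfiniteChain {β : Ordinal} (hβ : β < (Cardinal.aleph 1).ord) :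
    (range fun α : Iio β => transfiniteChain x₀ next α).Countable :=
  have := (Ordinal.countable_Iio_of_lt_ord_aleph_one hβ).to_subtype
  countable_range _

lemma transfiniteChain_induction {P : X → Prop} (h₀ : P x₀)
    (hnext : ∀ S : Set X, S.Countable → (∀ x ∈ S, P x) → P (next S)) {β : Ordinal}
    (hβ : β < (Cardinal.aleph 1).ord) : P (transfiniteChain x₀ next β) := by
  induction β using WellFoundedLT.induction with
  | _ β ih =>
    rcases eq_or_ne β 0 with rfl | hβ0
    · rwa [transfiniteChain_zero]
    · rw [transfiniteChain_of_ne_zero x₀ next hβ0]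
      exact hnext _ (countable_range_transfiniteChain hβ)
        (forall_mem_range.2 fun α => ih α α.2 (α.2.trans hβ))

end TransfiniteChain

/-- Given `f₀` satisfying (1)–(5), there is a transfinite family `(f_α)_{α < ω₁}` of such
functions with `f_β/f_α^{(n)} → ∞` at `0⁺` for all `α < β < ω₁` and all `n`. -/
theorem exists_omega1_chain_of_goodFn (f₀ : ℝ → ℝ) (h₀ : GoodFn f₀) :
    ∃ f : Ordinal → ℝ → ℝ, f 0 = f₀ ∧
      (∀ α : Ordinal, α < (Cardinal.aleph 1).ord → GoodFn (f α)) ∧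
      (∀ α β : Ordinal, α < β → β < (Cardinal.aleph 1).ord → ∀ n : ℕ,
        Tendsto (fun x => f β x / (f α)^[n] x) (nhdsWithin 0 (Set.Ioi 0)) atTop) := by
  choose! next hnext_good hnext_div using
    fun (𝒢 : Set (ℝ → ℝ)) (h𝒢 : 𝒢.Countable) (hgood : ∀ g ∈ 𝒢, GoodFn g) =>
      exists_goodFn_tendsto_div_iterate_atTop h𝒢 hgood
  have hgood : ∀ β < (Cardinal.aleph 1).ord, GoodFn (transfiniteChain f₀ next β) :=
    fun β => transfiniteChain_induction h₀ hnext_good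
  refine ⟨transfiniteChain f₀ next, transfiniteChain_zero f₀ next, hgood,
    fun α β hαβ hβ n => ?_⟩
  rw [transfiniteChain_of_ne_zero f₀ next (pos_of_gt hαβ).ne']
  exact hnext_div _ (countable_range_transfiniteChain hβ)
    (forall_mem_range.2 fun γ => hgood γ (γ.2.trans hβ)) _ (mem_range_self ⟨α, hαβ⟩) n
end
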